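/- arXiv:2309.11617 — 3 statements merged into one kernel-verified Lean document; each statement's English description precedes it below -/
import Mathlib

section
/- Suppose a real random variable X satisfies: for every δ ∈ (0,1], with probability at least 1 − δ, X ≤ A + √(B + C log(1/δ)), where A, B are real constants, B ≥ 0, and C > 0. Then E[X] ≤ A + √B + (1/2) e^{B/C} erfc(√(B/C)) √(πC). -/
/-!
Put `a = A + √B`. Then `E[X] ≤ a + E[(X - a)⁺] = a + ∫₀^∞ P(X > a + t) dt` by the layer-cake
formula. Taking `δ = exp ((B - (√B + t)²) / C)` in the hypothesis makes its threshold exactly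
`a + t`, so `P(X > a + t) ≤ e^{B/C} e^{-(√B + t)²/C}`, a Gaussian tail whose integral over
`(0, ∞)` becomes the `erfc` term after the substitution `u = (√B + t) / √C`.
-/

open MeasureTheory ProbabilityTheory

/-- The complementary error function `erfc z = (2/√π) ∫_z^∞ e^{-t²} dt`. -/
noncomputable def erfc (z : ℝ) : ℝ :=
  (2 / Real.sqrt Real.pi) * ∫ t in Set.Ioi z, Real.exp (-t ^ 2)

open Set Real

theorem setIntegral_Ioi_comp_add_right {E : Type*} [NormedAddCommGroup E] [NormedSpace ℝ E]
    (f : ℝ → E) (a c : ℝ) :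
    ∫ x in Ioi a, f (x + c) = ∫ x in Ioi (a + c), f x := by
  rw [← integral_indicator measurableSet_Ioi, ← integral_indicator measurableSet_Ioi,
    ← integral_add_right_eq_self ((Ioi (a + c)).indicator f) c]
  congr 1
  ext x
  simp only [indicator_apply, mem_Ioi, add_lt_add_iff_right]

theorem integral_Ioi_exp_neg_sq_div {c : ℝ} (hc : 0 < c) (b : ℝ) :
    ∫ t in Ioi b, exp (-t ^ 2 / c) = √(π * c) / 2 * erfc (b / √c) := by
  have hsc : 0 < √c := sqrt_pos.2 hc
  have hscale : ∫ t in Ioi b, exp (-t ^ 2 / c)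
      = √c * ∫ u in Ioi ((√c)⁻¹ * b), exp (-u ^ 2) := by
    rw [← integral_comp_mul_left_Ioi' _ b (inv_pos.2 hsc), smul_eq_mul, ← mul_assoc,
      mul_inv_cancel₀ hsc.ne', one_mul]
    congr 1 with t
    rw [mul_pow, inv_pow, sq_sqrt hc.le]
    ring_nf
  rw [hscale, erfc, sqrt_mul pi_pos.le, inv_mul_eq_div]
  field_simp

theorem integral_Ioi_zero_exp_sub_sq {B C : ℝ} (hB : 0 ≤ B) (hC : 0 < C) :
    ∫ t in Ioi 0, exp ((B - (√B + t) ^ 2) / C)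
      = (1 / 2) * exp (B / C) * erfc (√(B / C)) * √(π * C) := by
  have hsplit : ∀ t, exp ((B - (√B + t) ^ 2) / C) = exp (B / C) * exp (-(t + √B) ^ 2 / C) := by
    intro t
    rw [← exp_add]
    ring_nf
  simp_rw [hsplit]
  rw [integral_const_mul, setIntegral_Ioi_comp_add_right (fun t => exp (-t ^ 2 / C)), zero_add,
    integral_Ioi_exp_neg_sq_div hC, ← sqrt_div hB]
  ring

theorem integrable_exp_sub_sq_div (B b : ℝ) {C : ℝ} (hC : 0 < C) :
    Integrable (fun t => exp ((B - (b + t) ^ 2) / C)) := by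
  have hsplit : (fun t => exp ((B - (b + t) ^ 2) / C))
      = fun t => exp (B / C) * exp (-(1 / C) * (t + b) ^ 2) := by
    ext t
    rw [← exp_add]
    ring_nf
  rw [hsplit]
  exact ((integrable_exp_neg_mul_sq (one_div_pos.2 hC)).comp_add_right b).const_mul _

section Probability

variable {Ω : Type*} [MeasurableSpace Ω] {μ : Measure Ω} [IsProbabilityMeasure μ] {X : Ω → ℝ}

theorem integral_le_add_integral_measureReal_lt (hX : Integrable X μ) (a : ℝ) :
    ∫ ω, X ω ∂μ ≤ a + ∫ t in Ioi 0, μ.real {ω | a + t < X ω} := by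
  have hpos : Integrable (fun ω => max (X ω - a) 0) μ := (hX.sub (integrable_const a)).pos_part
  have hlayer : ∫ ω, max (X ω - a) 0 ∂μ = ∫ t in Ioi 0, μ.real {ω | a + t < X ω} := by
    rw [hpos.integral_eq_integral_meas_lt (ae_of_all _ fun ω => le_max_right _ _)]
    refine setIntegral_congr_fun measurableSet_Ioi fun t (ht : 0 < t) => ?_
    congr 1
    ext ω
    simp only [mem_ofPred_eq, lt_max_iff, ht.not_gt, or_false]
    constructor <;> intro <;> linarith
  calc ∫ ω, X ω ∂μ ≤ ∫ ω, (a + max (X ω - a) 0) ∂μ :=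
        integral_mono hX ((integrable_const a).add hpos) fun ω => by
          linarith [le_max_left (X ω - a) 0]
    _ = a + ∫ t in Ioi 0, μ.real {ω | a + t < X ω} := by
        rw [integral_add (integrable_const a) hpos, hlayer, integral_const, probReal_univ,
          one_smul]

theorem measureReal_lt_le_of_one_sub_le (hX : AEMeasurable X μ) {s δ : ℝ}
    (h : 1 - δ ≤ μ.real {ω | X ω ≤ s}) : μ.real {ω | s < X ω} ≤ δ := by
  have hcompl : {ω | s < X ω} = {ω | X ω ≤ s}ᶜ := by
    ext ω
    simp
  rw [hcompl, probReal_compl_eq_one_sub₀ (nullMeasurableSet_le hX aemeasurable_const)]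
  linarith

theorem measureReal_lt_le_exp_of_tail_bound (hX : AEMeasurable X μ) {A B C : ℝ}
    (hB : 0 ≤ B) (hC : 0 < C)
    (h : ∀ δ ∈ Ioc (0 : ℝ) 1, 1 - δ ≤ μ.real {ω | X ω ≤ A + √(B + C * log (1 / δ))})
    {t : ℝ} (ht : 0 ≤ t) :
    μ.real {ω | A + √B + t < X ω} ≤ exp ((B - (√B + t) ^ 2) / C) := by
  set δ := exp ((B - (√B + t) ^ 2) / C)
  have hBle : B ≤ (√B + t) ^ 2 := by nlinarith [sq_sqrt hB, sqrt_nonneg B]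
  have hδ : δ ∈ Ioc (0 : ℝ) 1 :=
    ⟨exp_pos _, exp_le_one_iff.2 (div_nonpos_of_nonpos_of_nonneg (by linarith) hC.le)⟩
  have hradicand : B + C * log (1 / δ) = (√B + t) ^ 2 := by
    rw [one_div, log_inv, log_exp, mul_neg, mul_div_cancel₀ _ hC.ne']
    ring
  have hlevel : A + √(B + C * log (1 / δ)) = A + √B + t := by
    rw [hradicand, sqrt_sq (by positivity), add_assoc]
  have := h δ hδ
  rw [hlevel] at this
  exact measureReal_lt_le_of_one_sub_le hX this

end Probability

/-- From a high-probability tail bound to a bound on the expectation: if for every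
`δ ∈ (0,1]`, with probability at least `1 - δ`, `X ≤ A + √(B + C log(1/δ))`, then
`E[X] ≤ A + √B + (1/2) e^{B/C} erfc(√(B/C)) √(πC)`. -/
theorem expectation_from_tail_bound {Ω : Type*} [MeasureSpace Ω]
    [IsProbabilityMeasure (ℙ : Measure Ω)]
    (X : Ω → ℝ) (hX : Integrable X ℙ)
    (A B C : ℝ) (hB : 0 ≤ B) (hC : 0 < C)
    (h : ∀ δ : ℝ, δ ∈ Set.Ioc (0 : ℝ) 1 →
      1 - δ ≤ ((ℙ : Measure Ω) {ω : Ω | X ω ≤ A + Real.sqrt (B + C * Real.log (1 / δ))}).toReal) :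
    ∫ ω, X ω ∂(ℙ : Measure Ω)
      ≤ A + Real.sqrt B
          + (1 / 2) * Real.exp (B / C) * erfc (Real.sqrt (B / C))
            * Real.sqrt (Real.pi * C) := by
  have htail : ∫ t in Ioi 0, (ℙ : Measure Ω).real {ω | A + √B + t < X ω}
      ≤ ∫ t in Ioi 0, exp ((B - (√B + t) ^ 2) / C) :=
    integral_mono_of_nonneg (ae_of_all _ fun _ => measureReal_nonneg)
      (integrable_exp_sub_sq_div B √B hC).integrableOn
      ((ae_restrict_iff' measurableSet_Ioi).2 (ae_of_all _ fun _ ht =>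
        measureReal_lt_le_exp_of_tail_bound hX.aemeasurable hB hC h ht.le))
  calc ∫ ω, X ω ∂(ℙ : Measure Ω)
      ≤ A + √B + ∫ t in Ioi 0, (ℙ : Measure Ω).real {ω | A + √B + t < X ω} :=
        integral_le_add_integral_measureReal_lt hX _
    _ ≤ A + √B + ∫ t in Ioi 0, exp ((B - (√B + t) ^ 2) / C) := add_le_add_right htail _
    _ = _ := by rw [integral_Ioi_zero_exp_sub_sq hB hC]
end

section
/- (Operator Khintchine upper bound for trace norm) Let X₁,…,X_N be Hermitian matrices and σ₁,…,σ_N independent Rademacher variables. Then E_σ ‖∑ₖ σₖ Xₖ‖₁ ≤ ‖√(∑ₖ Xₖ²)‖₁ = Tr √(∑ₖ Xₖ²). -/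
open Matrix
open scoped ComplexOrder

/-- The positive semidefinite square root of a positive semidefinite matrix
(the definition of `Matrix.PosSemidef.sqrt` in the older Mathlib, since removed). -/
noncomputable def Matrix.PosSemidef.sqrt {n : Type*} [Fintype n] [DecidableEq n]
    {A : Matrix n n ℂ} (hA : A.PosSemidef) : Matrix n n ℂ :=
  hA.1.eigenvectorUnitary.1 * diagonal ((↑) ∘ (√·) ∘ hA.1.eigenvalues) *
    (star hA.1.eigenvectorUnitary : Matrix n n ℂ)

theorem Matrix.PosSemidef.posSemidef_sqrt {n : Type*} [Fintype n] [DecidableEq n]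
    {A : Matrix n n ℂ} (hA : A.PosSemidef) : hA.sqrt.PosSemidef := by
  have hd : (diagonal ((↑) ∘ (√·) ∘ hA.1.eigenvalues) : Matrix n n ℂ).PosSemidef :=
    Matrix.PosSemidef.diagonal (fun i => by
      simp only [Function.comp_apply, Pi.zero_apply]
      exact_mod_cast Real.sqrt_nonneg _)
  have := hd.mul_mul_conjTranspose_same (hA.1.eigenvectorUnitary : Matrix n n ℂ)
  rw [← Matrix.star_eq_conjTranspose] at this
  exact this

/-- Trace norm of a complex matrix: `Tr √(Aᴴ A)`. -/
noncomputable def traceNorm {n : Type*} [Fintype n] [DecidableEq n]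
    (A : Matrix n n ℂ) : ℝ :=
  ((Matrix.posSemidef_conjTranspose_mul_self A).sqrt.trace).re

/-- Positive semidefinite square root (for PSD inputs): `(AᴴA)^{1/4}`, which equals
`√A` whenever `A` is positive semidefinite. -/
noncomputable def msqrt {n : Type*} [Fintype n] [DecidableEq n]
    (A : Matrix n n ℂ) : Matrix n n ℂ :=
  (Matrix.posSemidef_conjTranspose_mul_self A).posSemidef_sqrt.sqrt

/-- `±1` value of a Rademacher sign encoded as a `Bool`. -/
def radR (b : Bool) : ℝ := if b then 1 else -1

/-!
For Hermitian `P` and positive definite `T`, positivity of `(P - T) T⁻¹ (P - T)` gives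
`2 Tr P ≤ Tr (P T⁻¹ P) + Tr T`. Taking `P = |Y|` yields `2 ‖Y‖₁ ≤ Tr (Y² T⁻¹) + Tr T`, which is
linear in `Y²`. For `Y = ∑ₖ σₖ Xₖ` the sign average of `Y²` is `S = ∑ₖ Xₖ²` by orthogonality of
the Rademacher signs, and for `T = √S + ε` one has `Tr (S T⁻¹) ≤ Tr √S`. Hence
`E ‖Y‖₁ ≤ Tr √S + ε d / 2` for every `ε > 0`.
-/

open scoped MatrixOrder

namespace Matrix

variable {n : Type*} [Fintype n] [DecidableEq n]

theorem PosSemidef.sqrt_eq_cfcSqrt {A : Matrix n n ℂ} (hA : A.PosSemidef) :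
    hA.sqrt = CFC.sqrt A := by
  rw [CFC.sqrt_eq_cfc, cfc_nnreal_eq_real _ A hA.nonneg, hA.1.cfc_eq]
  simp [IsHermitian.cfc, PosSemidef.sqrt, Function.comp_def, Unitary.conjStarAlgAut_apply,
    fun x => max_eq_left (hA.eigenvalues_nonneg x)]

section RCLike

variable {𝕜 : Type*} [RCLike 𝕜]

theorem PosSemidef.trace_mul_nonneg {A B : Matrix n n 𝕜} (hA : A.PosSemidef)
    (hB : B.PosSemidef) : 0 ≤ (A * B).trace := by
  obtain ⟨R, rfl⟩ := CStarAlgebra.nonneg_iff_eq_star_mul_self.mp hB.nonneg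
  rw [← mul_assoc, trace_mul_comm, ← mul_assoc, star_eq_conjTranspose]
  exact (hA.mul_mul_conjTranspose_same R).trace_nonneg

theorem IsHermitian.two_mul_trace_le {P T : Matrix n n 𝕜} (hP : P.IsHermitian)
    (hT : T.PosDef) : 2 * P.trace ≤ (P * T⁻¹ * P).trace + T.trace := by
  have hdet : IsUnit T.det := (isUnit_iff_isUnit_det T).mp hT.isUnit
  have hsq : (P - T)ᴴ * T⁻¹ * (P - T) = P * T⁻¹ * P - 2 • P + T := by
    calc (P - T)ᴴ * T⁻¹ * (P - T)
        = P * T⁻¹ * P - P * (T⁻¹ * T) - (T * T⁻¹) * P + (T * T⁻¹) * T := by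
          rw [conjTranspose_sub, hP.eq, hT.isHermitian.eq]; noncomm_ring
      _ = P * T⁻¹ * P - 2 • P + T := by
          rw [mul_nonsing_inv T hdet, nonsing_inv_mul T hdet]; noncomm_ring
  have hnonneg := (hT.inv.posSemidef.conjTranspose_mul_mul_same (P - T)).trace_nonneg
  rw [hsq, trace_add, trace_sub, trace_smul, two_smul] at hnonneg
  rw [← sub_nonneg]
  convert hnonneg using 1
  ring

theorem PosSemidef.trace_mul_self_mul_inv_add_smul_one_le {Q : Matrix n n 𝕜}
    (hQ : Q.PosSemidef) {ε : ℝ} (hε : 0 < ε) :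
    (Q * Q * (Q + ε • 1)⁻¹).trace ≤ Q.trace := by
  set T := Q + ε • (1 : Matrix n n 𝕜)
  have hT : T.PosDef := PosDef.posSemidef_add hQ (PosDef.one.smul hε)
  have hsplit : Q * Q * T⁻¹ + ε • (Q * T⁻¹) = Q := by
    rw [← smul_mul_assoc, ← add_mul, ← mul_smul_one, ← mul_add,
      mul_assoc, mul_nonsing_inv T ((isUnit_iff_isUnit_det T).mp hT.isUnit), mul_one]
  have hnonneg : 0 ≤ ε • (Q * T⁻¹).trace :=
    smul_nonneg hε.le (hQ.trace_mul_nonneg hT.inv.posSemidef)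
  calc (Q * Q * T⁻¹).trace ≤ (Q * Q * T⁻¹).trace + ε • (Q * T⁻¹).trace :=
        le_add_of_nonneg_right hnonneg
    _ = Q.trace := by rw [← trace_smul, ← trace_add, hsplit]

end RCLike

end Matrix

theorem traceNorm_eq_re_trace_cfcAbs {n : Type*} [Fintype n] [DecidableEq n]
    (A : Matrix n n ℂ) :
    traceNorm A = (CFC.abs A).trace.re := by
  rw [traceNorm, PosSemidef.sqrt_eq_cfcSqrt]
  rfl

theorem msqrt_eq_cfcSqrt {n : Type*} [Fintype n] [DecidableEq n] {A : Matrix n n ℂ}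
    (hA : A.PosSemidef) : msqrt A = CFC.sqrt A := by
  rw [msqrt, PosSemidef.sqrt_eq_cfcSqrt, PosSemidef.sqrt_eq_cfcSqrt]
  exact congrArg CFC.sqrt (CFC.abs_of_nonneg A hA.nonneg)

theorem two_mul_traceNorm_le {n : Type*} [Fintype n] [DecidableEq n] (A : Matrix n n ℂ)
    {T : Matrix n n ℂ} (hT : T.PosDef) :
    2 * traceNorm A ≤ (Aᴴ * A * T⁻¹).trace.re + T.trace.re := by
  have hP : (CFC.abs A).IsHermitian := (CFC.abs_nonneg A).posSemidef.isHermitian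
  have h := hP.two_mul_trace_le hT
  rw [trace_mul_cycle, CFC.abs_mul_abs] at h
  rw [traceNorm_eq_re_trace_cfcAbs]
  simpa [star_eq_conjTranspose] using (Complex.le_def.mp h).1

section Rademacher

variable {ι : Type*} [Fintype ι] [DecidableEq ι]

theorem radR_mul_self (b : Bool) : radR b * radR b = 1 := by
  cases b <;> simp [radR]

theorem radR_not (b : Bool) : radR (!b) = -radR b := by
  cases b <;> simp [radR]

theorem sum_radR_mul_radR (j k : ι) :
    ∑ σ : ι → Bool, radR (σ j) * radR (σ k) = if j = k then (2 : ℝ) ^ Fintype.card ι else 0 := by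
  split_ifs with hjk
  · simp [hjk, radR_mul_self]
  · -- flipping the sign `σ j` is a bijection that negates every summand
    have hflip : Function.Involutive fun σ : ι → Bool => Function.update σ j (!σ j) := by
      intro σ
      simp
    have hneg := Equiv.sum_comp (hflip.toPerm _) fun σ : ι → Bool => radR (σ j) * radR (σ k)
    simp only [Function.Involutive.coe_toPerm, Function.update_self,
      Function.update_of_ne (Ne.symm hjk), radR_not, neg_mul, Finset.sum_neg_distrib] at hneg
    linarith

theorem sum_sum_radR_smul_mul_self {A : Type*} [Ring A] [Algebra ℝ A] (x : ι → A) :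
    ∑ σ : ι → Bool, (∑ k, radR (σ k) • x k) * (∑ k, radR (σ k) • x k)
      = (2 : ℝ) ^ Fintype.card ι • ∑ k, x k * x k := by
  simp only [Finset.sum_mul_sum, smul_mul_smul_comm]
  rw [Finset.sum_comm]
  simp only [Finset.sum_comm (γ := ι → Bool), ← Finset.sum_smul, sum_radR_mul_radR, ite_smul,
    zero_smul, Finset.sum_ite_eq, Finset.mem_univ, if_true, Finset.smul_sum]

end Rademacher

theorem mean_traceNorm_sum_radR_smul_le {ι n : Type*} [Fintype ι] [DecidableEq ι] [Fintype n]
    [DecidableEq n] (X : ι → Matrix n n ℂ) (hX : ∀ k, (X k).IsHermitian)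
    {T : Matrix n n ℂ} (hT : T.PosDef) :
    2 * (((2 : ℝ) ^ Fintype.card ι)⁻¹ * ∑ σ : ι → Bool, traceNorm (∑ k, radR (σ k) • X k))
      ≤ ((∑ k, X k * X k) * T⁻¹).trace.re + T.trace.re := by
  have hY (σ : ι → Bool) : (∑ k, radR (σ k) • X k)ᴴ = ∑ k, radR (σ k) • X k :=
    isSelfAdjoint_sum _ fun k _ => (hX k).smul (IsSelfAdjoint.all _)
  have hsum := Finset.sum_le_sum fun (σ : ι → Bool) (_ : σ ∈ Finset.univ) =>
    two_mul_traceNorm_le (∑ k, radR (σ k) • X k) hT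
  simp only [hY, ← Finset.mul_sum, Finset.sum_add_distrib, ← Complex.re_sum, ← trace_sum,
    ← Finset.sum_mul, sum_sum_radR_smul_mul_self, smul_mul_assoc, trace_smul, Complex.smul_re,
    Finset.sum_const, Finset.card_univ, Fintype.card_fun, Fintype.card_bool, nsmul_eq_mul,
    Nat.cast_pow, Nat.cast_ofNat] at hsum
  have h2 : (0 : ℝ) < 2 ^ Fintype.card ι := by positivity
  rw [mul_left_comm, inv_mul_le_iff₀ h2]
  rwa [smul_eq_mul, ← mul_add] at hsum

open Filter Topology in
/-- Operator Khintchine inequality, upper bound for the trace norm: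
for Hermitian matrices `X₁,…,X_N`, `E_σ ‖∑ₖ σₖ Xₖ‖₁ ≤ Tr √(∑ₖ Xₖ²)`. -/
theorem operator_khintchine_upper {d N : ℕ}
    (X : Fin N → Matrix (Fin d) (Fin d) ℂ) (hX : ∀ k, (X k).IsHermitian) :
    ((2 : ℝ) ^ N)⁻¹ * ∑ σ : Fin N → Bool, traceNorm (∑ k, radR (σ k) • X k)
      ≤ ((msqrt (∑ k, X k * X k)).trace).re := by
  set S := ∑ k, X k * X k
  have hS : S.PosSemidef :=
    posSemidef_sum _ fun k _ => by
      simpa only [(hX k).eq] using posSemidef_conjTranspose_mul_self (X k)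
  set Q := CFC.sqrt S
  have hQ : Q.PosSemidef := (CFC.sqrt_nonneg S).posSemidef
  have hbound (ε : ℝ) (hε : 0 < ε) :
      2 * (((2 : ℝ) ^ N)⁻¹ * ∑ σ : Fin N → Bool, traceNorm (∑ k, radR (σ k) • X k))
        ≤ 2 * Q.trace.re + ε * d := by
    have hmean := mean_traceNorm_sum_radR_smul_le X hX
      (PosDef.posSemidef_add hQ (PosDef.one.smul hε))
    have htrace := hQ.trace_mul_self_mul_inv_add_smul_one_le hε
    rw [CFC.sqrt_mul_sqrt_self S hS.nonneg] at htrace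
    simp only [Fintype.card_fin, trace_add, trace_smul, trace_one, Complex.add_re,
      Complex.smul_re, Complex.natCast_re, smul_eq_mul] at hmean
    linarith [(Complex.le_def.mp htrace).1]
  rw [msqrt_eq_cfcSqrt hS]
  have hlim : Tendsto (fun ε : ℝ => 2 * Q.trace.re + ε * d) (𝓝[>] 0) (𝓝 (2 * Q.trace.re)) :=
    tendsto_nhdsWithin_of_tendsto_nhds <|
      (by fun_prop : Continuous fun ε : ℝ => 2 * Q.trace.re + ε * d).tendsto' 0 _ (by simp)
  exact le_of_mul_le_mul_left (ge_of_tendsto hlim (eventually_nhdsWithin_of_forall hbound))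
    two_pos
end

section
/- (Lipschitz constant of the majority-vote error function) Let V = 2v+1 be odd and define c_v(p) = ∑_{n=0}^{v} C(2v+1,n) p^n (1−p)^{2v+1−n} for p ∈ [0,1] (the probability that at most v of 2v+1 independent trials succeed when each succeeds with probability p). Then c_v is differentiable on (0,1) and |c_v'(p)| ≤ 2√((v+1)/π); in particular c_v is 2√((V+1)/(2π))-Lipschitz. -/
/-!
Differentiating the Bernstein sum telescopes, so `c_v'(p) = -(2v+1) C(2v,v) (p(1-p))^v`,
which on `[0,1]` is largest in absolute value at `p = 1/2`. There `(2v+1) C(2v,v) / 4^v` is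
bounded through Wallis' product `W v = 16^v / ((2v+1) C(2v,v)^2) ≥ (2v+1)/(2v+2) · π/2`.
-/

open Finset

/-- The majority-vote error function: the probability that at most `v` of `2v+1`
independent trials succeed, when each succeeds with probability `p`. -/
noncomputable def majErr (v : ℕ) (p : ℝ) : ℝ :=
  ∑ n ∈ Finset.range (v + 1),
    (Nat.choose (2 * v + 1) n : ℝ) * p ^ n * (1 - p) ^ (2 * v + 1 - n)

open Nat in
theorem Real.Wallis.mul_centralBinom_sq_mul_W (n : ℕ) :
    (2 * n + 1) * (n.centralBinom : ℝ) ^ 2 * W n = 16 ^ n := by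
  have hc : (n.centralBinom : ℝ) = (2 * n)! / (n ! * n !) := by
    rw [centralBinom_eq_two_mul_choose, Nat.cast_choose ℝ (by omega : n ≤ 2 * n),
      show 2 * n - n = n by omega]
  rw [W_eq_factorial_ratio, hc, show (16 : ℝ) ^ n = 2 ^ (4 * n) by rw [pow_mul]; norm_num]
  field_simp

open Real.Wallis in
theorem mul_centralBinom_div_four_pow_sq_le (n : ℕ) :
    ((2 * n + 1) * n.centralBinom / 4 ^ n : ℝ) ^ 2 ≤ 4 * (n + 1) / Real.pi := by
  have hW := mul_centralBinom_sq_mul_W n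
  have hpos := W_pos n
  have hlow : (2 * n + 1) * Real.pi ≤ 4 * (n + 1) * W n := by
    have := le_W n
    rw [div_mul_div_comm, div_le_iff₀ (by positivity)] at this
    linarith
  calc ((2 * n + 1) * n.centralBinom / 4 ^ n : ℝ) ^ 2 = (2 * n + 1) / W n := by
        rw [eq_div_iff hpos.ne', div_pow, ← pow_mul, pow_mul', show (4 : ℝ) ^ 2 = 16 by norm_num,
          ← hW]
        have := n.centralBinom_ne_zero
        field_simp
    _ ≤ 4 * (n + 1) / Real.pi := by rwa [div_le_div_iff₀ hpos Real.pi_pos]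

theorem mul_centralBinom_div_four_pow_le (n : ℕ) :
    ((2 * n + 1) * n.centralBinom / 4 ^ n : ℝ) ≤ 2 * √((n + 1) / Real.pi) := by
  rw [show (2 : ℝ) * √((n + 1) / Real.pi) = √(4 * (n + 1) / Real.pi) by
    rw [mul_div_assoc, Real.sqrt_mul (by norm_num), show (4 : ℝ) = 2 ^ 2 by norm_num,
      Real.sqrt_sq (by norm_num)]]
  exact Real.le_sqrt_of_sq_le (mul_centralBinom_div_four_pow_sq_le n)

open Polynomial in
theorem bernsteinPolynomial.derivative_sum_range (R : Type*) [CommRing R] (n k : ℕ) :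
    derivative (∑ ν ∈ range (k + 1), bernsteinPolynomial R (n + 1) ν) =
      -(n + 1) * bernsteinPolynomial R n k := by
  induction k with
  | zero => simp [bernsteinPolynomial.derivative_zero]
  | succ k ih =>
    rw [sum_range_succ, derivative_add, ih, bernsteinPolynomial.derivative_succ]
    push_cast
    ring

theorem majErr_eq_eval (v : ℕ) :
    majErr v = fun p ↦ (∑ ν ∈ range (v + 1), bernsteinPolynomial ℝ (2 * v + 1) ν).eval p := by
  ext p
  simp [majErr, bernsteinPolynomial, Polynomial.eval_finsetSum]

theorem hasDerivAt_majErr (v : ℕ) (p : ℝ) :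
    HasDerivAt (majErr v) (-((2 * v + 1) * v.centralBinom * (p * (1 - p)) ^ v)) p := by
  have h := (∑ ν ∈ range (v + 1), bernsteinPolynomial ℝ (2 * v + 1) ν).hasDerivAt p
  rw [bernsteinPolynomial.derivative_sum_range, ← majErr_eq_eval] at h
  refine h.congr_deriv ?_
  simp only [bernsteinPolynomial, Nat.centralBinom_eq_two_mul_choose, show 2 * v - v = v by omega,
    Polynomial.eval_mul, Polynomial.eval_neg, Polynomial.eval_add, Polynomial.eval_natCast,
    Polynomial.eval_one, Polynomial.eval_pow, Polynomial.eval_X, Polynomial.eval_sub]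
  push_cast [mul_pow]
  ring

theorem abs_deriv_majErr_le (v : ℕ) {p : ℝ} (hp : p ∈ Set.Icc (0 : ℝ) 1) :
    |deriv (majErr v) p| ≤ (2 * v + 1) * v.centralBinom / 4 ^ v := by
  obtain ⟨hp0, hp1⟩ := hp
  have hvar_nonneg : 0 ≤ p * (1 - p) := mul_nonneg hp0 (sub_nonneg.2 hp1)
  have hvar_le : p * (1 - p) ≤ 1 / 4 := by nlinarith [sq_nonneg (2 * p - 1)]
  rw [(hasDerivAt_majErr v p).deriv, abs_neg,
    abs_of_nonneg (mul_nonneg (by positivity) (pow_nonneg hvar_nonneg v))]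
  calc (2 * v + 1) * v.centralBinom * (p * (1 - p)) ^ v
      ≤ (2 * v + 1) * v.centralBinom * (1 / 4) ^ v := by gcongr
    _ = (2 * v + 1) * v.centralBinom / 4 ^ v := by rw [one_div_pow, mul_one_div]

/-- Lipschitz constant of the majority-vote error function: `c_v` is differentiable on
`(0,1)` with `|c_v'(p)| ≤ 2√((v+1)/π)`, and, with `V = 2v+1`, it is
`2√((V+1)/(2π))`-Lipschitz on `[0,1]`. -/
theorem majErr_lipschitz (v : ℕ) :
    DifferentiableOn ℝ (majErr v) (Set.Ioo (0 : ℝ) 1) ∧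
    (∀ p ∈ Set.Ioo (0 : ℝ) 1,
      |deriv (majErr v) p| ≤ 2 * Real.sqrt (((v : ℝ) + 1) / Real.pi)) ∧
    LipschitzOnWith
      (Real.toNNReal (2 * Real.sqrt ((((2 * v + 1 : ℕ) : ℝ) + 1) / (2 * Real.pi))))
      (majErr v) (Set.Icc (0 : ℝ) 1) := by
  have hdiff (p : ℝ) : DifferentiableAt ℝ (majErr v) p := (hasDerivAt_majErr v p).differentiableAt
  have hbound (p : ℝ) (hp : p ∈ Set.Icc (0 : ℝ) 1) :
      |deriv (majErr v) p| ≤ 2 * √((v + 1) / Real.pi) :=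
    (abs_deriv_majErr_le v hp).trans (mul_centralBinom_div_four_pow_le v)
  have hconst : (((2 * v + 1 : ℕ) : ℝ) + 1) / (2 * Real.pi) = (v + 1) / Real.pi := by
    push_cast
    field_simp
    ring
  refine ⟨fun p _ ↦ (hdiff p).differentiableWithinAt,
    fun p hp ↦ hbound p (Set.Ioo_subset_Icc_self hp), ?_⟩
  rw [hconst]
  exact (convex_Icc 0 1).lipschitzOnWith_of_nnnorm_deriv_le (fun p _ ↦ hdiff p)
    (fun p hp ↦ NNReal.le_toNNReal_of_coe_le (hbound p hp))
end
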